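/- arXiv:1904.09859 — 5 statements merged into one kernel-verified Lean document; each statement's English description precedes it below -/
import Mathlib

section
/- Rule removal theorem (abstract form): let → be a binary relation on A that decomposes as →₁ ∪ →₂, where →₁ ⊆ ≻ and →₂ ⊆ ⪰ for a well-founded relation ≻ compatible with a quasi-order ⪰ (i.e., ≻∘⪰ ⊆ ≻ and ⪰∘≻ ⊆ ≻). Then → is terminating (strongly normalizing) if and only if →₂ is terminating. -/
/-- Rule removal theorem (abstract form): if `→₁ ⊆ ≻` and `→₂ ⊆ ⪰` for a
well-founded `≻` compatible with a quasi-order `⪰`, then `→₁ ∪ →₂` is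
terminating iff `→₂` is terminating. -/
theorem rule_removal {A : Type*} (r₁ r₂ succ wsucc : A → A → Prop)
    (h₁ : ∀ a b, r₁ a b → succ a b) (h₂ : ∀ a b, r₂ a b → wsucc a b)
    (hwf : WellFounded (fun a b => succ b a))
    (hrefl : Reflexive wsucc) (htrans : Transitive wsucc)
    (hcompat₁ : ∀ a b c, succ a b → wsucc b c → succ a c)
    (hcompat₂ : ∀ a b c, wsucc a b → succ b c → succ a c) :
    WellFounded (fun a b => r₁ b a ∨ r₂ b a) ↔ WellFounded (fun a b => r₂ b a) := by
  constructor
  · intro h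
    exact Subrelation.wf (fun hr => Or.inr hr) h
  · intro hr₂
    set R : A → A → Prop := fun a b => r₁ b a ∨ r₂ b a with hR
    have key : ∀ a, Acc (fun a b => r₂ b a) a →
        (∀ b, succ a b → Acc R b) → Acc R a := by
      intro a hacc
      induction hacc with
      | intro a _ ih =>
        intro H
        constructor
        intro y hy
        rcases hy with hy | hy
        · exact H y (h₁ a y hy)
        · exact ih y hy (fun c hc => H c (hcompat₂ a y c (h₂ a y hy) hc))
    have main : ∀ a, Acc R a := by
      intro a
      induction hwf.apply a with
      | intro a _ ih =>
        exact key a (hr₂.apply a) (fun b hb => ih b hb)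
    exact ⟨main⟩
end

section
/- The coinductive relations ⪰ and ≻ on closed interpretation terms are compatible: if s ≻ t and t ⪰ u then s ≻ u, and if s ⪰ t and t ≻ u then s ≻ u (at each type). -/
/-- Kinds: `κ ::= * | κ ⇒ κ`. -/
inductive Kind : Type
  | star : Kind
  | arr : Kind → Kind → Kind

/-- Closed β-normal interpretation types over a family `Con κ` of closed type
constructors of each kind: the base type `nat`, arrow types, and universal
types (a universal type is given by its instantiation function `Con κ → ITy`). -/
inductive ITy (Con : Kind → Type) : Type
  | nat : ITy Con
  | arrow : ITy Con → ITy Con → ITy Con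
  | all : (κ : Kind) → (Con κ → ITy Con) → ITy Con

/-- The defining (coinductive unfolding) clauses of the typewise ordering with
base comparison `P` of natural-number normal forms at type `nat`:
pointwise over closed normal term arguments at arrow types, and pointwise over
closed type constructors at universal types. -/
def Unfolds {Con : Kind → Type} {Tm : Type}
    (app : Tm → Tm → Tm) (tapp : (κ : Kind) → Tm → Con κ → Tm)
    (Normal : ITy Con → Tm → Prop) (nf : Tm → ℕ)
    (P : ℕ → ℕ → Prop) (R : ITy Con → Tm → Tm → Prop) : Prop :=
  (∀ s t, R ITy.nat s t ↔ P (nf s) (nf t)) ∧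
  (∀ a b s t, R (ITy.arrow a b) s t ↔ ∀ q, Normal a q → R b (app s q) (app t q)) ∧
  (∀ (κ : Kind) (body : Con κ → ITy Con) s t,
    R (ITy.all κ body) s t ↔ ∀ ρ : Con κ, R (body ρ) (tapp κ s ρ) (tapp κ t ρ))

/-- Compatibility of the coinductive orderings: `≻ ∘ ⪰ ⊆ ≻` and
`⪰ ∘ ≻ ⊆ ≻` at each type. -/
theorem coinductive_orderings_compatible
    {Con : Kind → Type} {Tm : Type}
    (app : Tm → Tm → Tm) (tapp : (κ : Kind) → Tm → Con κ → Tm)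
    (Normal : ITy Con → Tm → Prop) (nf : Tm → ℕ)
    (succ wsucc : ITy Con → Tm → Tm → Prop)
    (hsucc : Unfolds app tapp Normal nf (· > ·) succ)
    (hwsucc : Unfolds app tapp Normal nf (· ≥ ·) wsucc) :
    (∀ σ s t u, succ σ s t → wsucc σ t u → succ σ s u) ∧
    (∀ σ s t u, wsucc σ s t → succ σ t u → succ σ s u) := by
  obtain ⟨sn, sa, sl⟩ := hsucc
  obtain ⟨wn, wa, wl⟩ := hwsucc
  have key : ∀ σ : ITy Con,
      (∀ s t u, succ σ s t → wsucc σ t u → succ σ s u) ∧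
      (∀ s t u, wsucc σ s t → succ σ t u → succ σ s u) := by
    intro σ
    induction σ with
    | nat =>
      constructor <;> intro s t u h1 h2 <;>
        simp_all [sn, wn] <;> omega
    | arrow a b ih1 ih2 =>
      constructor <;> intro s t u h1 h2 <;> rw [sa] at * <;> rw [wa] at * <;>
        intro q hq
      · exact ih2.1 _ _ _ (h1 q hq) (h2 q hq)
      · exact ih2.2 _ _ _ (h1 q hq) (h2 q hq)
    | all κ body ih =>
      constructor <;> intro s t u h1 h2 <;> rw [sl] at * <;> rw [wl] at * <;>
        intro ρ
      · exact (ih ρ).1 _ _ _ (h1 ρ) (h2 ρ)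
      · exact (ih ρ).2 _ _ _ (h1 ρ) (h2 ρ)
  exact ⟨fun σ => (key σ).1, fun σ => (key σ).2⟩
end

section
/- If t ⇝ s (one reduction step on interpretation terms), then t ≈ s, i.e., both t ⪰ s and s ⪰ t, for the coinductively defined weak ordering ⪰. Consequently, ⪰ and ≻ are invariant under replacing either side by any of its reducts or expansions: if t ≻ s and t ⇝ t' then t' ≻ s, and if s ⇝ s' then t ≻ s'. -/
/-- One-step reduction `⇝` preserves the coinductive orderings: if `t ⇝ s`
then `t ≈ s` (both `t ⪰ s` and `s ⪰ t`), and consequently `⪰` and `≻` are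
invariant under replacing either side by a reduct or an expansion. -/
theorem reduction_preserves_orderings
    {Con : Kind → Type} {Tm : Type}
    (app : Tm → Tm → Tm) (tapp : (κ : Kind) → Tm → Con κ → Tm)
    (Normal : ITy Con → Tm → Prop) (nf : Tm → ℕ)
    (Red : Tm → Tm → Prop)
    (hnf : ∀ t s, Red t s → nf t = nf s)
    (happ_left : ∀ t t' u, Red t t' → Red (app t u) (app t' u))
    (happ_right : ∀ t u u', Red u u' → Red (app t u) (app t u'))
    (htapp : ∀ (κ : Kind) t t' (ρ : Con κ), Red t t' → Red (tapp κ t ρ) (tapp κ t' ρ))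
    (succ wsucc : ITy Con → Tm → Tm → Prop)
    (hsucc : Unfolds app tapp Normal nf (· > ·) succ)
    (hwsucc : Unfolds app tapp Normal nf (· ≥ ·) wsucc) :
    (∀ σ t s, Red t s → wsucc σ t s ∧ wsucc σ s t) ∧
    (∀ σ t s t', succ σ t s → (Red t t' ∨ Red t' t) → succ σ t' s) ∧
    (∀ σ t s s', succ σ t s → (Red s s' ∨ Red s' s) → succ σ t s') ∧
    (∀ σ t s t', wsucc σ t s → (Red t t' ∨ Red t' t) → wsucc σ t' s) ∧
    (∀ σ t s s', wsucc σ t s → (Red s s' ∨ Red s' s) → wsucc σ t s') := by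
  have key : ∀ (P : ℕ → ℕ → Prop) (R : ITy Con → Tm → Tm → Prop),
      Unfolds app tapp Normal nf P R →
      ∀ σ t t', Red t t' → ∀ s, (R σ t s ↔ R σ t' s) ∧ (R σ s t ↔ R σ s t') := by
    intro P R ⟨hn, ha, hall⟩ σ
    induction σ with
    | nat =>
      intro t t' h s
      constructor
      · rw [hn, hn, hnf t t' h]
      · rw [hn, hn, hnf t t' h]
    | arrow a b iha ihb =>
      intro t t' h s
      constructor
      · rw [ha, ha]
        exact forall_congr' fun q => imp_congr_right fun _ =>
          (ihb (app t q) (app t' q) (happ_left t t' q h) (app s q)).1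
      · rw [ha, ha]
        exact forall_congr' fun q => imp_congr_right fun _ =>
          (ihb (app t q) (app t' q) (happ_left t t' q h) (app s q)).2
    | all κ body ih =>
      intro t t' h s
      constructor
      · rw [hall, hall]
        exact forall_congr' fun ρ =>
          (ih ρ (tapp κ t ρ) (tapp κ t' ρ) (htapp κ t t' ρ h) (tapp κ s ρ)).1
      · rw [hall, hall]
        exact forall_congr' fun ρ =>
          (ih ρ (tapp κ t ρ) (tapp κ t' ρ) (htapp κ t t' ρ h) (tapp κ s ρ)).2
  have refl_w : ∀ σ t, wsucc σ t t := by
    obtain ⟨hn, ha, hall⟩ := hwsucc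
    intro σ
    induction σ with
    | nat => intro t; exact (hn t t).2 le_rfl
    | arrow a b iha ihb => intro t; exact (ha a b t t).2 fun q _ => ihb (app t q)
    | all κ body ih => intro t; exact (hall κ body t t).2 fun ρ => ih ρ (tapp κ t ρ)
  refine ⟨?_, ?_, ?_, ?_, ?_⟩
  · intro σ t s h
    exact ⟨((key _ _ hwsucc σ t s h t).2.mp (refl_w σ t)),
           ((key _ _ hwsucc σ t s h t).1.mp (refl_w σ t))⟩
  · rintro σ t s t' h (hr | hr)
    · exact (key _ _ hsucc σ t t' hr s).1.mp h
    · exact (key _ _ hsucc σ t' t hr s).1.mpr h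
  · rintro σ t s s' h (hr | hr)
    · exact (key _ _ hsucc σ s s' hr t).2.mp h
    · exact (key _ _ hsucc σ s' s hr t).2.mpr h
  · rintro σ t s t' h (hr | hr)
    · exact (key _ _ hwsucc σ t t' hr s).1.mp h
    · exact (key _ _ hwsucc σ t' t hr s).1.mpr h
  · rintro σ t s s' h (hr | hr)
    · exact (key _ _ hwsucc σ s s' hr t).2.mp h
    · exact (key _ _ hwsucc σ s' s hr t).2.mpr h
end

section
/- Strict monotonicity of addition and conditional strict monotonicity of multiplication: in the interpretation calculus with polymorphic ⊕ and ⊗ (which reduce to pointwise addition/multiplication at function and universal types and to arithmetic at nat), if s ≻ t then s ⊕ u ≻ t ⊕ u and u ⊕ s ≻ u ⊕ t; and if additionally u ⪰ lift(1), then s ⊗ u ≻ t ⊗ u and u ⊗ s ≻ u ⊗ t. -/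
/-- The interpretation calculus: closed interpretation terms with application,
type application, natural number literals and normal forms, the polymorphic
operations `⊕`, `⊗`, `lift`, `flatten`, a reduction relation `⇝` satisfying
the type-directed rules, and the coinductive typewise orderings `≻`, `⪰`. -/
structure InterpCalc (Con : Kind → Type) (Tm : Type) where
  app : Tm → Tm → Tm
  tapp : (κ : Kind) → Tm → Con κ → Tm
  Normal : ITy Con → Tm → Prop
  HasType : ITy Con → Tm → Prop
  nf : Tm → ℕ
  lit : ℕ → Tm
  plus : ITy Con → Tm → Tm → Tm
  times : ITy Con → Tm → Tm → Tm
  lift : ITy Con → Tm → Tm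
  flatten : ITy Con → Tm → Tm
  chi : (κ : Kind) → Con κ
  Red : Tm → Tm → Prop
  succ : ITy Con → Tm → Tm → Prop
  wsucc : ITy Con → Tm → Tm → Prop
  /-- `≻` satisfies the coinductive unfolding clauses with base comparison `>`. -/
  succ_unfold : Unfolds app tapp Normal nf (· > ·) succ
  /-- `⪰` satisfies the coinductive unfolding clauses with base comparison `≥`. -/
  wsucc_unfold : Unfolds app tapp Normal nf (· ≥ ·) wsucc
  /-- Reduction preserves (unique) normal forms. -/
  nf_red : ∀ s t, Red s t → nf s = nf t
  nf_lit : ∀ n, nf (lit n) = n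
  red_app_left : ∀ s s' t, Red s s' → Red (app s t) (app s' t)
  red_app_right : ∀ s t t', Red t t' → Red (app s t) (app s t')
  red_tapp : ∀ (κ : Kind) s s' (ρ : Con κ), Red s s' → Red (tapp κ s ρ) (tapp κ s' ρ)
  /-- `⊕_nat n m ⇝ n + m` (on normal forms). -/
  nf_plus_nat : ∀ s t, nf (plus ITy.nat s t) = nf s + nf t
  /-- `⊗_nat n m ⇝ n · m` (on normal forms). -/
  nf_times_nat : ∀ s t, nf (times ITy.nat s t) = nf s * nf t
  /-- `lift_nat s ⇝ s`. -/
  nf_lift_nat : ∀ s, nf (lift ITy.nat s) = nf s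
  /-- `flatten_nat s ⇝ s`. -/
  nf_flatten_nat : ∀ s, nf (flatten ITy.nat s) = nf s
  /-- `(s ⊕_{σ→τ} t)·q ⇝* (s·q) ⊕_τ (t·q)`. -/
  red_plus_arrow : ∀ a b s t q,
    Relation.ReflTransGen Red (app (plus (ITy.arrow a b) s t) q)
      (plus b (app s q) (app t q))
  /-- `(s ⊕_{∀α.σ} t)·ρ ⇝* (s·ρ) ⊕ (t·ρ)`. -/
  red_plus_all : ∀ (κ : Kind) (body : Con κ → ITy Con) s t (ρ : Con κ),
    Relation.ReflTransGen Red (tapp κ (plus (ITy.all κ body) s t) ρ)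
      (plus (body ρ) (tapp κ s ρ) (tapp κ t ρ))
  /-- `(s ⊗_{σ→τ} t)·q ⇝* (s·q) ⊗_τ (t·q)`. -/
  red_times_arrow : ∀ a b s t q,
    Relation.ReflTransGen Red (app (times (ITy.arrow a b) s t) q)
      (times b (app s q) (app t q))
  /-- `(s ⊗_{∀α.σ} t)·ρ ⇝* (s·ρ) ⊗ (t·ρ)`. -/
  red_times_all : ∀ (κ : Kind) (body : Con κ → ITy Con) s t (ρ : Con κ),
    Relation.ReflTransGen Red (tapp κ (times (ITy.all κ body) s t) ρ)
      (times (body ρ) (tapp κ s ρ) (tapp κ t ρ))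
  /-- `lift_{σ→τ}(n)·q ⇝* lift_τ(n)`. -/
  red_lift_arrow : ∀ a b n q,
    Relation.ReflTransGen Red (app (lift (ITy.arrow a b) n) q) (lift b n)
  /-- `lift_{∀α.σ}(n)·ρ ⇝* lift_σ(n)`. -/
  red_lift_all : ∀ (κ : Kind) (body : Con κ → ITy Con) n (ρ : Con κ),
    Relation.ReflTransGen Red (tapp κ (lift (ITy.all κ body) n) ρ) (lift (body ρ) n)
  /-- `flatten_{σ→τ}(s) ⇝* flatten_τ(s·lift_σ(0))`. -/
  red_flatten_arrow : ∀ a b s,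
    Relation.ReflTransGen Red (flatten (ITy.arrow a b) s)
      (flatten b (app s (lift a (lit 0))))
  /-- `flatten_{∀(α:κ).σ}(s) ⇝* flatten_{σ[α:=χ_κ]}(s·χ_κ)`. -/
  red_flatten_all : ∀ (κ : Kind) (body : Con κ → ITy Con) s,
    Relation.ReflTransGen Red (flatten (ITy.all κ body) s)
      (flatten (body (chi κ)) (tapp κ s (chi κ)))

/-- `≈`: mutual weak comparison. -/
def InterpCalc.Equiv {Con : Kind → Type} {Tm : Type} (C : InterpCalc Con Tm)
    (σ : ITy Con) (s t : Tm) : Prop :=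
  C.wsucc σ s t ∧ C.wsucc σ t s

section Aux

variable {Con : Kind → Type} {Tm : Type} (C : InterpCalc Con Tm)

lemma InterpCalc.nf_reds {s t : Tm} (h : Relation.ReflTransGen C.Red s t) :
    C.nf s = C.nf t := by
  induction h with
  | refl => rfl
  | tail _ h2 ih => exact ih.trans (C.nf_red _ _ h2)

lemma InterpCalc.reds_app_left {s s' : Tm} (t : Tm)
    (h : Relation.ReflTransGen C.Red s s') :
    Relation.ReflTransGen C.Red (C.app s t) (C.app s' t) := by
  induction h with
  | refl => exact .refl
  | tail _ h2 ih => exact ih.tail (C.red_app_left _ _ _ h2)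

lemma InterpCalc.reds_tapp (κ : Kind) {s s' : Tm} (ρ : Con κ)
    (h : Relation.ReflTransGen C.Red s s') :
    Relation.ReflTransGen C.Red (C.tapp κ s ρ) (C.tapp κ s' ρ) := by
  induction h with
  | refl => exact .refl
  | tail _ h2 ih => exact ih.tail (C.red_tapp _ _ _ _ h2)

lemma unfolds_red_iff {P : ℕ → ℕ → Prop} {R : ITy Con → Tm → Tm → Prop}
    (hR : Unfolds C.app C.tapp C.Normal C.nf P R) :
    ∀ (σ : ITy Con) (s s' t t' : Tm),
      Relation.ReflTransGen C.Red s s' → Relation.ReflTransGen C.Red t t' →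
      (R σ s t ↔ R σ s' t') := by
  obtain ⟨hnat, harr, hall⟩ := hR
  intro σ
  induction σ with
  | nat =>
    intro s s' t t' hs ht
    rw [hnat, hnat, C.nf_reds hs, C.nf_reds ht]
  | arrow a b iha ihb =>
    intro s s' t t' hs ht
    rw [harr, harr]
    exact forall_congr' fun q => imp_congr_right fun _ =>
      ihb _ _ _ _ (C.reds_app_left q hs) (C.reds_app_left q ht)
  | all κ body ih =>
    intro s s' t t' hs ht
    rw [hall, hall]
    exact forall_congr' fun ρ =>
      ih ρ _ _ _ _ (C.reds_tapp κ ρ hs) (C.reds_tapp κ ρ ht)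

end Aux

/-- Strict monotonicity of addition and conditional strict monotonicity of
multiplication: if `s ≻ t` then `s ⊕ u ≻ t ⊕ u` and `u ⊕ s ≻ u ⊕ t`; and if
additionally `u ⪰ lift(1)` then `s ⊗ u ≻ t ⊗ u` and `u ⊗ s ≻ u ⊗ t`. -/
theorem plus_strict_mono_and_times_cond_strict_mono
    {Con : Kind → Type} {Tm : Type} (C : InterpCalc Con Tm) :
    ∀ (σ : ITy Con) (s t u : Tm), C.succ σ s t →
      (C.succ σ (C.plus σ s u) (C.plus σ t u) ∧
       C.succ σ (C.plus σ u s) (C.plus σ u t)) ∧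
      (C.wsucc σ u (C.lift σ (C.lit 1)) →
        C.succ σ (C.times σ s u) (C.times σ t u) ∧
        C.succ σ (C.times σ u s) (C.times σ u t)) := by
  obtain ⟨snat, sarr, sall⟩ := C.succ_unfold
  obtain ⟨wnat, warr, wall⟩ := C.wsucc_unfold
  intro σ
  induction σ with
  | nat =>
    intro s t u hst
    rw [snat] at hst
    refine ⟨⟨?_, ?_⟩, fun hu => ?_⟩
    · rw [snat, C.nf_plus_nat, C.nf_plus_nat]; omega
    · rw [snat, C.nf_plus_nat, C.nf_plus_nat]; omega
    · rw [wnat, C.nf_lift_nat, C.nf_lit] at hu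
      constructor <;>
        · rw [snat, C.nf_times_nat, C.nf_times_nat]; nlinarith
  | arrow a b iha ihb =>
    intro s t u hst
    rw [sarr] at hst
    refine ⟨⟨?_, ?_⟩, fun hu => ?_⟩
    · rw [sarr]
      intro q hq
      rw [unfolds_red_iff C C.succ_unfold b _ _ _ _
        (C.red_plus_arrow a b s u q) (C.red_plus_arrow a b t u q)]
      exact ((ihb _ _ (C.app u q) (hst q hq)).1).1
    · rw [sarr]
      intro q hq
      rw [unfolds_red_iff C C.succ_unfold b _ _ _ _
        (C.red_plus_arrow a b u s q) (C.red_plus_arrow a b u t q)]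
      exact ((ihb _ _ (C.app u q) (hst q hq)).1).2
    · rw [warr] at hu
      constructor
      · rw [sarr]
        intro q hq
        rw [unfolds_red_iff C C.succ_unfold b _ _ _ _
          (C.red_times_arrow a b s u q) (C.red_times_arrow a b t u q)]
        have hu' : C.wsucc b (C.app u q) (C.lift b (C.lit 1)) := by
          have := hu q hq
          rwa [unfolds_red_iff C C.wsucc_unfold b _ _ _ _
            Relation.ReflTransGen.refl (C.red_lift_arrow a b (C.lit 1) q)] at this
        exact ((ihb _ _ (C.app u q) (hst q hq)).2 hu').1
      · rw [sarr]
        intro q hq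
        rw [unfolds_red_iff C C.succ_unfold b _ _ _ _
          (C.red_times_arrow a b u s q) (C.red_times_arrow a b u t q)]
        have hu' : C.wsucc b (C.app u q) (C.lift b (C.lit 1)) := by
          have := hu q hq
          rwa [unfolds_red_iff C C.wsucc_unfold b _ _ _ _
            Relation.ReflTransGen.refl (C.red_lift_arrow a b (C.lit 1) q)] at this
        exact ((ihb _ _ (C.app u q) (hst q hq)).2 hu').2
  | all κ body ih =>
    intro s t u hst
    rw [sall] at hst
    refine ⟨⟨?_, ?_⟩, fun hu => ?_⟩
    · rw [sall]
      intro ρ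
      rw [unfolds_red_iff C C.succ_unfold (body ρ) _ _ _ _
        (C.red_plus_all κ body s u ρ) (C.red_plus_all κ body t u ρ)]
      exact ((ih ρ _ _ (C.tapp κ u ρ) (hst ρ)).1).1
    · rw [sall]
      intro ρ
      rw [unfolds_red_iff C C.succ_unfold (body ρ) _ _ _ _
        (C.red_plus_all κ body u s ρ) (C.red_plus_all κ body u t ρ)]
      exact ((ih ρ _ _ (C.tapp κ u ρ) (hst ρ)).1).2
    · rw [wall] at hu
      constructor
      · rw [sall]
        intro ρ
        rw [unfolds_red_iff C C.succ_unfold (body ρ) _ _ _ _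
          (C.red_times_all κ body s u ρ) (C.red_times_all κ body t u ρ)]
        have hu' : C.wsucc (body ρ) (C.tapp κ u ρ) (C.lift (body ρ) (C.lit 1)) := by
          have := hu ρ
          rwa [unfolds_red_iff C C.wsucc_unfold (body ρ) _ _ _ _
            Relation.ReflTransGen.refl (C.red_lift_all κ body (C.lit 1) ρ)] at this
        exact ((ih ρ _ _ (C.tapp κ u ρ) (hst ρ)).2 hu').1
      · rw [sall]
        intro ρ
        rw [unfolds_red_iff C C.succ_unfold (body ρ) _ _ _ _
          (C.red_times_all κ body u s ρ) (C.red_times_all κ body u t ρ)]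
        have hu' : C.wsucc (body ρ) (C.tapp κ u ρ) (C.lift (body ρ) (C.lit 1)) := by
          have := hu ρ
          rwa [unfolds_red_iff C C.wsucc_unfold (body ρ) _ _ _ _
            Relation.ReflTransGen.refl (C.red_lift_all κ body (C.lit 1) ρ)] at this
        exact ((ih ρ _ _ (C.tapp κ u ρ) (hst ρ)).2 hu').2
end

section
/- Semiring laws up to equivalence: for all interpretation terms s, t, u of the same type σ, s ⊕ t ≈ t ⊕ s, s ⊗ t ≈ t ⊗ s, s ⊕ (t ⊕ u) ≈ (s ⊕ t) ⊕ u, s ⊗ (t ⊗ u) ≈ (s ⊗ t) ⊗ u, s ⊗ (t ⊕ u) ≈ (s ⊗ t) ⊕ (s ⊗ u), lift_σ(0) ⊕ s ≈ s, and lift_σ(1) ⊗ s ≈ s, where ≈ is the intersection of ⪰ with its converse. -/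
/-!
Each law is an identity between two semiring expressions that holds in `ℕ`. Read such an
expression at type `σ` as a term built from `⊕_σ`, `⊗_σ`, `lift_σ`. Applying it to a closed
argument (or type constructor) reduces it to the same expression read at the result type, with
the argument applied to each variable. Since `⪰` is a preorder that respects reduction and
`⊕`, `⊗` are monotone, `≈` at an arrow or universal type thus reduces to `≈` at the result type,
and at `nat` both sides normalise to the same number.
-/

inductive SemiringExpr (ι : Type) : Type
  | var : ι → SemiringExpr ι
  | num : ℕ → SemiringExpr ι
  | add : SemiringExpr ι → SemiringExpr ι → SemiringExpr ι
  | mul : SemiringExpr ι → SemiringExpr ι → SemiringExpr ι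

def SemiringExpr.eval {ι : Type} (ν : ι → ℕ) : SemiringExpr ι → ℕ
  | var i => ν i
  | num n => n
  | add e f => e.eval ν + f.eval ν
  | mul e f => e.eval ν * f.eval ν

namespace InterpCalc

open Relation SemiringExpr

variable {Con : Kind → Type} {Tm : Type} (C : InterpCalc Con Tm)

theorem nf_eq_of_reflTransGen {s t : Tm} (h : ReflTransGen C.Red s t) : C.nf s = C.nf t := by
  induction h with
  | refl => rfl
  | tail _ hst ih => exact ih.trans (C.nf_red _ _ hst)

theorem reflTransGen_app {s s' : Tm} (q : Tm) (h : ReflTransGen C.Red s s') :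
    ReflTransGen C.Red (C.app s q) (C.app s' q) :=
  h.lift (C.app · q) fun _ _ => C.red_app_left _ _ q

theorem reflTransGen_tapp {κ : Kind} {s s' : Tm} (ρ : Con κ) (h : ReflTransGen C.Red s s') :
    ReflTransGen C.Red (C.tapp κ s ρ) (C.tapp κ s' ρ) :=
  h.lift (C.tapp κ · ρ) fun _ _ => C.red_tapp κ _ _ ρ

theorem wsucc_iff_of_reflTransGen {σ : ITy Con} {s s' t t' : Tm}
    (hs : ReflTransGen C.Red s s') (ht : ReflTransGen C.Red t t') :
    C.wsucc σ s t ↔ C.wsucc σ s' t' := by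
  induction σ generalizing s s' t t' with
  | nat =>
    simp only [C.wsucc_unfold.1, C.nf_eq_of_reflTransGen hs, C.nf_eq_of_reflTransGen ht]
  | arrow a b _ ih =>
    simp only [C.wsucc_unfold.2.1]
    exact forall₂_congr fun q _ => ih (C.reflTransGen_app q hs) (C.reflTransGen_app q ht)
  | all κ body ih =>
    simp only [C.wsucc_unfold.2.2]
    exact forall_congr' fun ρ => ih ρ (C.reflTransGen_tapp ρ hs) (C.reflTransGen_tapp ρ ht)

theorem wsucc_refl (σ : ITy Con) (s : Tm) : C.wsucc σ s s := by
  induction σ generalizing s with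
  | nat => exact (C.wsucc_unfold.1 s s).mpr le_rfl
  | arrow a b _ ih => exact (C.wsucc_unfold.2.1 a b s s).mpr fun q _ => ih _
  | all κ body ih => exact (C.wsucc_unfold.2.2 κ body s s).mpr fun ρ => ih ρ _

theorem wsucc_trans {σ : ITy Con} {s t u : Tm} (hst : C.wsucc σ s t) (htu : C.wsucc σ t u) :
    C.wsucc σ s u := by
  induction σ generalizing s t u with
  | nat =>
    rw [C.wsucc_unfold.1] at *
    exact le_trans htu hst
  | arrow a b _ ih =>
    rw [C.wsucc_unfold.2.1] at *
    exact fun q hq => ih (hst q hq) (htu q hq)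
  | all κ body ih =>
    rw [C.wsucc_unfold.2.2] at *
    exact fun ρ => ih ρ (hst ρ) (htu ρ)

theorem Equiv.refl (σ : ITy Con) (s : Tm) : C.Equiv σ s s :=
  ⟨C.wsucc_refl σ s, C.wsucc_refl σ s⟩

variable {C}

theorem Equiv.symm {σ : ITy Con} {s t : Tm} (h : C.Equiv σ s t) : C.Equiv σ t s :=
  ⟨h.2, h.1⟩

theorem Equiv.trans {σ : ITy Con} {s t u : Tm} (hst : C.Equiv σ s t) (htu : C.Equiv σ t u) :
    C.Equiv σ s u :=
  ⟨C.wsucc_trans hst.1 htu.1, C.wsucc_trans htu.2 hst.2⟩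

variable (C)

theorem equiv_of_reflTransGen {σ : ITy Con} {s t : Tm} (h : ReflTransGen C.Red s t) :
    C.Equiv σ s t :=
  ⟨(C.wsucc_iff_of_reflTransGen h .refl).mpr (C.wsucc_refl σ t),
    (C.wsucc_iff_of_reflTransGen .refl h).mpr (C.wsucc_refl σ t)⟩

theorem equiv_nat_iff {s t : Tm} : C.Equiv .nat s t ↔ C.nf s = C.nf t := by
  simp only [Equiv, C.wsucc_unfold.1, ge_iff_le, le_antisymm_iff, and_comm]

theorem equiv_arrow_iff {a b : ITy Con} {s t : Tm} :
    C.Equiv (.arrow a b) s t ↔ ∀ q, C.Normal a q → C.Equiv b (C.app s q) (C.app t q) := by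
  simp only [Equiv, C.wsucc_unfold.2.1, imp_and, forall_and]

theorem equiv_all_iff {κ : Kind} {body : Con κ → ITy Con} {s t : Tm} :
    C.Equiv (.all κ body) s t ↔ ∀ ρ, C.Equiv (body ρ) (C.tapp κ s ρ) (C.tapp κ t ρ) := by
  simp only [Equiv, C.wsucc_unfold.2.2, forall_and]

def IsPointwise (op : ITy Con → Tm → Tm → Tm) : Prop :=
  (∀ a b s t q, ReflTransGen C.Red (C.app (op (.arrow a b) s t) q) (op b (C.app s q) (C.app t q))) ∧
  ∀ κ body s t (ρ : Con κ),
    ReflTransGen C.Red (C.tapp κ (op (.all κ body) s t) ρ)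
      (op (body ρ) (C.tapp κ s ρ) (C.tapp κ t ρ))

theorem isPointwise_plus : C.IsPointwise C.plus := ⟨C.red_plus_arrow, C.red_plus_all⟩

theorem isPointwise_times : C.IsPointwise C.times := ⟨C.red_times_arrow, C.red_times_all⟩

variable {C}

theorem IsPointwise.wsucc_mono {op : ITy Con → Tm → Tm → Tm} (hop : C.IsPointwise op)
    (hnat : ∀ s s' t t', C.nf s' ≤ C.nf s → C.nf t' ≤ C.nf t →
      C.nf (op .nat s' t') ≤ C.nf (op .nat s t))
    {σ : ITy Con} {s s' t t' : Tm} (hs : C.wsucc σ s s') (ht : C.wsucc σ t t') :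
    C.wsucc σ (op σ s t) (op σ s' t') := by
  induction σ generalizing s s' t t' with
  | nat =>
    rw [C.wsucc_unfold.1] at *
    exact hnat _ _ _ _ hs ht
  | arrow a b _ ih =>
    rw [C.wsucc_unfold.2.1] at *
    exact fun q hq => (C.wsucc_iff_of_reflTransGen (hop.1 a b s t q) (hop.1 a b s' t' q)).mpr
      (ih (hs q hq) (ht q hq))
  | all κ body ih =>
    rw [C.wsucc_unfold.2.2] at *
    exact fun ρ => (C.wsucc_iff_of_reflTransGen (hop.2 κ body s t ρ) (hop.2 κ body s' t' ρ)).mpr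
      (ih ρ (hs ρ) (ht ρ))

theorem IsPointwise.equiv_congr {op : ITy Con → Tm → Tm → Tm} (hop : C.IsPointwise op)
    (hnat : ∀ s s' t t', C.nf s' ≤ C.nf s → C.nf t' ≤ C.nf t →
      C.nf (op .nat s' t') ≤ C.nf (op .nat s t))
    {σ : ITy Con} {s s' t t' : Tm} (hs : C.Equiv σ s s') (ht : C.Equiv σ t t') :
    C.Equiv σ (op σ s t) (op σ s' t') :=
  ⟨hop.wsucc_mono hnat hs.1 ht.1, hop.wsucc_mono hnat hs.2 ht.2⟩

variable (C)

theorem plus_congr {σ : ITy Con} {s s' t t' : Tm} (hs : C.Equiv σ s s') (ht : C.Equiv σ t t') :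
    C.Equiv σ (C.plus σ s t) (C.plus σ s' t') :=
  C.isPointwise_plus.equiv_congr (fun _ _ _ _ h₁ h₂ => by
    simpa only [C.nf_plus_nat] using Nat.add_le_add h₁ h₂) hs ht

theorem times_congr {σ : ITy Con} {s s' t t' : Tm} (hs : C.Equiv σ s s') (ht : C.Equiv σ t t') :
    C.Equiv σ (C.times σ s t) (C.times σ s' t') :=
  C.isPointwise_times.equiv_congr (fun _ _ _ _ h₁ h₂ => by
    simpa only [C.nf_times_nat] using Nat.mul_le_mul h₁ h₂) hs ht

def denote {ι : Type} (σ : ITy Con) (env : ι → Tm) : SemiringExpr ι → Tm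
  | var i => env i
  | num n => C.lift σ (C.lit n)
  | add e f => C.plus σ (denote σ env e) (denote σ env f)
  | mul e f => C.times σ (denote σ env e) (denote σ env f)

variable {ι : Type}

theorem nf_denote_nat (env : ι → Tm) (e : SemiringExpr ι) :
    C.nf (C.denote .nat env e) = e.eval (C.nf ∘ env) := by
  induction e with
  | var i => rfl
  | num n => simp only [denote, eval, C.nf_lift_nat, C.nf_lit]
  | add e f ihe ihf => simp only [denote, eval, C.nf_plus_nat, ihe, ihf]
  | mul e f ihe ihf => simp only [denote, eval, C.nf_times_nat, ihe, ihf]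

theorem app_denote_equiv (a b : ITy Con) (env : ι → Tm) (q : Tm) (e : SemiringExpr ι) :
    C.Equiv b (C.app (C.denote (.arrow a b) env e) q)
      (C.denote b (fun i => C.app (env i) q) e) := by
  induction e with
  | var i => exact Equiv.refl C b _
  | num n => exact C.equiv_of_reflTransGen (C.red_lift_arrow a b _ q)
  | add e f ihe ihf =>
    exact (C.equiv_of_reflTransGen (C.red_plus_arrow a b _ _ q)).trans (C.plus_congr ihe ihf)
  | mul e f ihe ihf =>
    exact (C.equiv_of_reflTransGen (C.red_times_arrow a b _ _ q)).trans (C.times_congr ihe ihf)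

theorem tapp_denote_equiv (κ : Kind) (body : Con κ → ITy Con) (env : ι → Tm) (ρ : Con κ)
    (e : SemiringExpr ι) :
    C.Equiv (body ρ) (C.tapp κ (C.denote (.all κ body) env e) ρ)
      (C.denote (body ρ) (fun i => C.tapp κ (env i) ρ) e) := by
  induction e with
  | var i => exact Equiv.refl C _ _
  | num n => exact C.equiv_of_reflTransGen (C.red_lift_all κ body _ ρ)
  | add e f ihe ihf =>
    exact (C.equiv_of_reflTransGen (C.red_plus_all κ body _ _ ρ)).trans (C.plus_congr ihe ihf)
  | mul e f ihe ihf =>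
    exact (C.equiv_of_reflTransGen (C.red_times_all κ body _ _ ρ)).trans (C.times_congr ihe ihf)

theorem equiv_denote_of_eval_eq {e₁ e₂ : SemiringExpr ι} (h : ∀ ν, e₁.eval ν = e₂.eval ν)
    (σ : ITy Con) (env : ι → Tm) : C.Equiv σ (C.denote σ env e₁) (C.denote σ env e₂) := by
  induction σ generalizing env with
  | nat => rw [equiv_nat_iff, nf_denote_nat, nf_denote_nat, h]
  | arrow a b _ ih =>
    exact C.equiv_arrow_iff.mpr fun q _ => (C.app_denote_equiv a b env q e₁).trans
      ((ih _).trans (C.app_denote_equiv a b env q e₂).symm)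
  | all κ body ih =>
    exact C.equiv_all_iff.mpr fun ρ => (C.tapp_denote_equiv κ body env ρ e₁).trans
      ((ih ρ _).trans (C.tapp_denote_equiv κ body env ρ e₂).symm)

end InterpCalc

open SemiringExpr in
/-- Semiring laws up to `≈` for the interpretation operations `⊕`, `⊗`,
`lift`: commutativity, associativity, distributivity and neutrality of
`lift 0` and `lift 1`. -/
theorem semiring_laws_up_to_equiv
    {Con : Kind → Type} {Tm : Type} (C : InterpCalc Con Tm) :
    ∀ (σ : ITy Con) (s t u : Tm),
      C.HasType σ s → C.HasType σ t → C.HasType σ u →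
      C.Equiv σ (C.plus σ s t) (C.plus σ t s) ∧
      C.Equiv σ (C.times σ s t) (C.times σ t s) ∧
      C.Equiv σ (C.plus σ s (C.plus σ t u)) (C.plus σ (C.plus σ s t) u) ∧
      C.Equiv σ (C.times σ s (C.times σ t u)) (C.times σ (C.times σ s t) u) ∧
      C.Equiv σ (C.times σ s (C.plus σ t u))
        (C.plus σ (C.times σ s t) (C.times σ s u)) ∧
      C.Equiv σ (C.plus σ (C.lift σ (C.lit 0)) s) s ∧
      C.Equiv σ (C.times σ (C.lift σ (C.lit 1)) s) s := by
  intro σ s t u _ _ _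
  have law (e₁ e₂ : SemiringExpr (Fin 3)) (h : ∀ ν, e₁.eval ν = e₂.eval ν) :=
    C.equiv_denote_of_eval_eq h σ ![s, t, u]
  let x : SemiringExpr (Fin 3) := var 0
  let y : SemiringExpr (Fin 3) := var 1
  let z : SemiringExpr (Fin 3) := var 2
  refine ⟨law (add x y) (add y x) ?_, law (mul x y) (mul y x) ?_,
    law (add x (add y z)) (add (add x y) z) ?_, law (mul x (mul y z)) (mul (mul x y) z) ?_,
    law (mul x (add y z)) (add (mul x y) (mul x z)) ?_, law (add (num 0) x) x ?_,
    law (mul (num 1) x) x ?_⟩ <;> intro ν <;> simp only [eval] <;> ring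
end
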